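/- Let f : ℝ → ℝ be four times continuously differentiable on an open interval with f''(x) ≠ 0 everywhere, and suppose f satisfies the ODE f''''·f'' = 3·(f''')^2. Let x(·) be a local inverse of -f' (assume f' is locally invertible) and define Y(X) = f(x(X)) - x(X)·(f')(x(X)), i.e., Y is obtained from f by the Legendre transformation (x, y, y1) ↦ (-y1, y - x·y1, x). Then Y is four times differentiable and satisfies Y'''' = 0. More precisely, at corresponding points, Y''''(X) = (f''''(x)·f''(x) - 3·f'''(x)^2)/f''(x)^5. -/

import Mathlib

/-!
In the Legendre coordinate `X = -f'(x)` one has `dx/dX = -1/f''(x)`, so for any function `φ` of `x`,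
`d/dX φ(x(X)) = -φ'(x)/f''(x)`. Starting from `Y = f - x f'`, whose `x`-derivative is `-x f''`, this
gives `Y' = x`, `Y'' = -1/f''`, `Y''' = -f'''/f''³` and `Y'''' = (f'''' f'' - 3 f'''²)/f''⁵`, which the
ODE makes vanish. Bootstrapping `x' = -1/f''(x)` shows that `x(X)` is `C³`, hence `Y` is `C⁴`.
-/

open Set Filter Topology

theorem contDiffOn_succ_of_hasDerivAt {𝕜 F : Type*} [NontriviallyNormedField 𝕜]
    [NormedAddCommGroup F] [NormedSpace 𝕜 F] {g g' : 𝕜 → F} {t : Set 𝕜} {n : ℕ} (ht : IsOpen t)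
    (hg : ∀ X ∈ t, HasDerivAt g (g' X) X) (hg' : ContDiffOn 𝕜 n g' t) :
    ContDiffOn 𝕜 (n + 1) g t :=
  (contDiffOn_succ_iff_deriv_of_isOpen ht).2
    ⟨fun X hX => (hg X hX).differentiableAt.differentiableWithinAt, by simp,
      hg'.congr fun X hX => (hg X hX).deriv⟩

theorem hasDerivAt_sub_mul_deriv {𝕜 : Type*} [NontriviallyNormedField 𝕜] {f : 𝕜 → 𝕜} {x : 𝕜}
    (hf : DifferentiableAt 𝕜 f x) (hf' : DifferentiableAt 𝕜 (deriv f) x) :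
    HasDerivAt (fun x => f x - x * deriv f x) (-(x * deriv (deriv f) x)) x := by
  refine (hf.hasDerivAt.sub ((hasDerivAt_id x).mul hf'.hasDerivAt)).congr_deriv ?_
  simp only [id_eq]
  ring

structure IsLegendreInverse (f xinv : ℝ → ℝ) (s t : Set ℝ) : Prop where
  isOpen_source : IsOpen s
  isOpen_target : IsOpen t
  differentiableOn_deriv : DifferentiableOn ℝ (deriv f) s
  deriv_deriv_ne_zero : ∀ x ∈ s, deriv (deriv f) x ≠ 0
  continuousOn : ContinuousOn xinv t
  mapsTo : MapsTo xinv t s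
  deriv_comp : ∀ X ∈ t, deriv f (xinv X) = -X

noncomputable def legendreTransform (f xinv : ℝ → ℝ) (X : ℝ) : ℝ :=
  f (xinv X) - xinv X * deriv f (xinv X)

namespace IsLegendreInverse

variable {f xinv : ℝ → ℝ} {s t : Set ℝ}

theorem hasDerivAt (h : IsLegendreInverse f xinv s t) {X : ℝ} (hX : X ∈ t) :
    HasDerivAt xinv (-(deriv (deriv f) (xinv X))⁻¹) X := by
  have hx := h.mapsTo hX
  have hf' : HasDerivAt (fun x => -deriv f x) (-deriv (deriv f) (xinv X)) (xinv X) :=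
    (h.differentiableOn_deriv.differentiableAt (h.isOpen_source.mem_nhds hx)).hasDerivAt.neg
  have hleft : ∀ᶠ Y in 𝓝 X, -deriv f (xinv Y) = Y :=
    eventually_of_mem (h.isOpen_target.mem_nhds hX) fun Y hY => by simp [h.deriv_comp Y hY]
  rw [← inv_neg]
  exact hf'.of_local_left_inverse (h.continuousOn.continuousAt (h.isOpen_target.mem_nhds hX))
    (neg_ne_zero.2 (h.deriv_deriv_ne_zero _ hx)) hleft

theorem hasDerivAt_comp (h : IsLegendreInverse f xinv s t) {φ ψ : ℝ → ℝ} {X : ℝ} (hX : X ∈ t)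
    (hφ : HasDerivAt φ (-(ψ (xinv X) * deriv (deriv f) (xinv X))) (xinv X)) :
    HasDerivAt (φ ∘ xinv) (ψ (xinv X)) X := by
  refine (hφ.comp X (h.hasDerivAt hX)).congr_deriv ?_
  field_simp [h.deriv_deriv_ne_zero _ (h.mapsTo hX)]

theorem eqOn_deriv (h : IsLegendreInverse f xinv s t) {F φ ψ : ℝ → ℝ} (hF : EqOn F (φ ∘ xinv) t)
    (hφ : ∀ x ∈ s, HasDerivAt φ (-(ψ x * deriv (deriv f) x)) x) :
    EqOn (deriv F) (ψ ∘ xinv) t := fun X hX => by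
  rw [(hF.eventuallyEq_of_mem (h.isOpen_target.mem_nhds hX)).deriv_eq]
  exact (h.hasDerivAt_comp hX (hφ _ (h.mapsTo hX))).deriv

theorem contDiffOn (h : IsLegendreInverse f xinv s t) :
    ∀ n : ℕ, ContDiffOn ℝ (n + 1) (deriv f) s → ContDiffOn ℝ (n + 1) xinv t
  | n, hf => by
    have hxinv : ContDiffOn ℝ n xinv t := by
      cases n with
      | zero => exact contDiffOn_zero.2 h.continuousOn
      | succ n => exact_mod_cast h.contDiffOn n (hf.of_le (by norm_cast; omega))
    have hf'' : ContDiffOn ℝ n (deriv (deriv f)) s := hf.deriv_of_isOpen h.isOpen_source le_rfl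
    exact contDiffOn_succ_of_hasDerivAt h.isOpen_target (fun X hX => h.hasDerivAt hX)
      ((hf''.comp hxinv h.mapsTo).inv fun X hX => h.deriv_deriv_ne_zero _ (h.mapsTo hX)).neg

theorem hasDerivAt_legendreTransform (h : IsLegendreInverse f xinv s t)
    (hf : DifferentiableOn ℝ f s) {X : ℝ} (hX : X ∈ t) :
    HasDerivAt (legendreTransform f xinv) (xinv X) X := by
  have hx := h.isOpen_source.mem_nhds (h.mapsTo hX)
  exact h.hasDerivAt_comp (ψ := id) hX <| hasDerivAt_sub_mul_deriv (hf.differentiableAt hx)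
    (h.differentiableOn_deriv.differentiableAt hx)

theorem contDiffOn_legendreTransform (h : IsLegendreInverse f xinv s t)
    (hf : DifferentiableOn ℝ f s) (n : ℕ) (hf' : ContDiffOn ℝ (n + 1) (deriv f) s) :
    ContDiffOn ℝ (n + 2) (legendreTransform f xinv) t := by
  exact_mod_cast contDiffOn_succ_of_hasDerivAt (n := n + 1) h.isOpen_target
    (fun X hX => h.hasDerivAt_legendreTransform hf hX) (h.contDiffOn n hf')

theorem deriv_deriv_legendreTransform (h : IsLegendreInverse f xinv s t)
    (hf : DifferentiableOn ℝ f s) :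
    EqOn (deriv (deriv (legendreTransform f xinv)))
      ((fun x => -(deriv (deriv f) x)⁻¹) ∘ xinv) t := by
  refine h.eqOn_deriv (φ := id) (fun X hX => (h.hasDerivAt_legendreTransform hf hX).deriv)
    fun x hx => (hasDerivAt_id x).congr_deriv ?_
  field_simp [h.deriv_deriv_ne_zero x hx]

theorem deriv_deriv_deriv_legendreTransform (h : IsLegendreInverse f xinv s t)
    (hf : DifferentiableOn ℝ f s) (hf'' : DifferentiableOn ℝ (deriv (deriv f)) s) :
    EqOn (deriv (deriv (deriv (legendreTransform f xinv))))
      ((fun x => -deriv (deriv (deriv f)) x / deriv (deriv f) x ^ 3) ∘ xinv) t := by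
  refine h.eqOn_deriv (h.deriv_deriv_legendreTransform hf) fun x hx => ?_
  have hf2 := h.deriv_deriv_ne_zero x hx
  refine ((hf''.differentiableAt (h.isOpen_source.mem_nhds hx)).hasDerivAt.inv hf2).neg
    |>.congr_deriv ?_
  field_simp

theorem deriv_deriv_deriv_deriv_legendreTransform (h : IsLegendreInverse f xinv s t)
    (hf : DifferentiableOn ℝ f s) (hf'' : DifferentiableOn ℝ (deriv (deriv f)) s)
    (hf''' : DifferentiableOn ℝ (deriv (deriv (deriv f))) s) :
    EqOn (deriv (deriv (deriv (deriv (legendreTransform f xinv)))))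
      ((fun x => (deriv (deriv (deriv (deriv f))) x * deriv (deriv f) x
        - 3 * deriv (deriv (deriv f)) x ^ 2) / deriv (deriv f) x ^ 5) ∘ xinv) t := by
  refine h.eqOn_deriv (h.deriv_deriv_deriv_legendreTransform hf hf'') fun x hx => ?_
  have hf2 := h.deriv_deriv_ne_zero x hx
  have hx := h.isOpen_source.mem_nhds hx
  refine ((hf'''.differentiableAt hx).hasDerivAt.neg.div
    ((hf''.differentiableAt hx).hasDerivAt.pow 3) (pow_ne_zero 3 hf2)).congr_deriv ?_
  simp only [Pi.neg_apply, Pi.pow_apply]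
  field_simp
  ring

end IsLegendreInverse

theorem legendre_trivializes (f : ℝ → ℝ) (s : Set ℝ) (hs : IsOpen s)
    (hf : ContDiffOn ℝ 4 f s)
    (hf2 : ∀ x ∈ s, deriv (deriv f) x ≠ 0)
    (hode : ∀ x ∈ s,
      deriv (deriv (deriv (deriv f))) x * deriv (deriv f) x
        = 3 * (deriv (deriv (deriv f)) x) ^ 2)
    (xinv : ℝ → ℝ) (t : Set ℝ) (ht : IsOpen t) (hcont : ContinuousOn xinv t)
    (hmap : ∀ X ∈ t, xinv X ∈ s)
    (hinv : ∀ X ∈ t, deriv f (xinv X) = -X) :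
    ContDiffOn ℝ 4 (fun X => f (xinv X) - xinv X * deriv f (xinv X)) t ∧
    ∀ X ∈ t,
      deriv (deriv (deriv (deriv (fun X => f (xinv X) - xinv X * deriv f (xinv X))))) X
        = (deriv (deriv (deriv (deriv f))) (xinv X) * deriv (deriv f) (xinv X)
            - 3 * (deriv (deriv (deriv f)) (xinv X)) ^ 2)
          / (deriv (deriv f) (xinv X)) ^ 5 ∧
      deriv (deriv (deriv (deriv (fun X => f (xinv X) - xinv X * deriv f (xinv X))))) X
        = 0 := by
  have hf' : ContDiffOn ℝ 3 (deriv f) s := hf.deriv_of_isOpen hs (by norm_num)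
  have hf'' : ContDiffOn ℝ 2 (deriv (deriv f)) s := hf'.deriv_of_isOpen hs (by norm_num)
  have hf''' : ContDiffOn ℝ 1 (deriv (deriv (deriv f))) s := hf''.deriv_of_isOpen hs (by norm_num)
  have h : IsLegendreInverse f xinv s t :=
    ⟨hs, ht, hf'.differentiableOn (by norm_num), hf2, hcont, hmap, hinv⟩
  have hf0 : DifferentiableOn ℝ f s := hf.differentiableOn (by norm_num)
  have hY := h.deriv_deriv_deriv_deriv_legendreTransform hf0 (hf''.differentiableOn (by norm_num))
    (hf'''.differentiableOn one_ne_zero)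
  refine ⟨h.contDiffOn_legendreTransform hf0 2 hf', fun X hX => ⟨hY hX, (hY hX).trans ?_⟩⟩
  rw [Function.comp_apply, hode _ (hmap X hX), sub_self, zero_div]
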